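/- arXiv:1607.08511 — 2 statements merged into one kernel-verified Lean document; each statement's English description precedes it below -/
import Mathlib

section
/- Let f : U → ℝᵐ be a smooth immersion of a connected open set U ⊆ ℝⁿ such that for every u ∈ U the position vector is tangential and nonzero, i.e. f(u) ∈ T_u and f(u) ≠ 0 (equivalently x^N(u) = 0 and f(u) ≠ 0). Then the image of f is locally a cone with vertex at the origin: for every u₀ ∈ U there exist ε > 0 and a smooth curve γ : (1−ε, 1+ε) → U with γ(1) = u₀ and f(γ(t)) = t • f(u₀) for all t ∈ (1−ε, 1+ε). (Lemma 3.1: if x = x^T holds identically then M is a conic submanifold with vertex at the origin.) -/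
open scoped RealInnerProductSpace

/-- Orthogonal projection of `v` onto the tangent space `T_u = range (fderiv ℝ f u)`. -/
noncomputable def tangentProj {n m : ℕ}
    (f : EuclideanSpace ℝ (Fin n) → EuclideanSpace ℝ (Fin m))
    (u : EuclideanSpace ℝ (Fin n)) (v : EuclideanSpace ℝ (Fin m)) :
    EuclideanSpace ℝ (Fin m) :=
  ((LinearMap.range (fderiv ℝ f u : EuclideanSpace ℝ (Fin n) →ₗ[ℝ] EuclideanSpace ℝ (Fin m))).orthogonalProjectionOnto v : EuclideanSpace ℝ (Fin m))

/-- Tangential component `x^T(u)` of the position vector. -/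
noncomputable def posT {n m : ℕ}
    (f : EuclideanSpace ℝ (Fin n) → EuclideanSpace ℝ (Fin m))
    (u : EuclideanSpace ℝ (Fin n)) : EuclideanSpace ℝ (Fin m) :=
  tangentProj f u (f u)

/-- Normal component `x^N(u)` of the position vector. -/
noncomputable def posN {n m : ℕ}
    (f : EuclideanSpace ℝ (Fin n) → EuclideanSpace ℝ (Fin m))
    (u : EuclideanSpace ℝ (Fin n)) : EuclideanSpace ℝ (Fin m) :=
  f u - tangentProj f u (f u)

/-- Second fundamental form `h_u(X,Y)`: the normal component of the second derivative. -/
noncomputable def sff {n m : ℕ}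
    (f : EuclideanSpace ℝ (Fin n) → EuclideanSpace ℝ (Fin m))
    (u X Y : EuclideanSpace ℝ (Fin n)) : EuclideanSpace ℝ (Fin m) :=
  fderiv ℝ (fderiv ℝ f) u X Y - tangentProj f u (fderiv ℝ (fderiv ℝ f) u X Y)

open Set



section Aux

variable {n m : ℕ}

local notation "En" => EuclideanSpace ℝ (Fin n)
local notation "Em" => EuclideanSpace ℝ (Fin m)

/-- The Gram operator `A† A` of an injective map is a unit. -/
lemma isUnit_gram (A : En →L[ℝ] Em) (hA : Function.Injective A) :
    IsUnit ((ContinuousLinearMap.adjoint A).comp A) := by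
  set G := (ContinuousLinearMap.adjoint A).comp A with hG
  have hzero : ∀ x, G x = 0 → x = 0 := by
    intro x hx
    have h1 : ⟪A x, A x⟫ = 0 := by
      rw [← ContinuousLinearMap.adjoint_inner_right A]
      have h : (ContinuousLinearMap.adjoint A) (A x) = G x := rfl
      rw [h, hx, inner_zero_right]
    have h2 : A x = 0 := by rwa [inner_self_eq_zero] at h1
    exact hA (by simpa using h2)
  have hinj : Function.Injective G := by
    intro a b hab
    have h0 : G (a - b) = 0 := by rw [map_sub, hab, sub_self]
    exact sub_eq_zero.mp (hzero _ h0)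
  have hsurj : Function.Surjective G :=
    LinearMap.injective_iff_surjective.mp hinj
  let e : En ≃ₗ[ℝ] En := LinearEquiv.ofBijective (G : En →ₗ[ℝ] En) ⟨hinj, hsurj⟩
  let ec : En ≃L[ℝ] En := e.toContinuousLinearEquiv
  have hec : ∀ x, ec x = G x := fun x => rfl
  refine ⟨⟨G, (ec.symm : En →L[ℝ] En), ?_, ?_⟩, rfl⟩
  · refine ContinuousLinearMap.ext fun x => ?_
    have : G ((ec.symm : En →L[ℝ] En) x) = ec (ec.symm x) := (hec _).symm
    simp only [ContinuousLinearMap.mul_apply, ContinuousLinearMap.one_apply,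
      ContinuousLinearMap.coe_coe, this, ec.apply_symm_apply]
  · refine ContinuousLinearMap.ext fun x => ?_
    have : (ec.symm : En →L[ℝ] En) (G x) = ec.symm (ec x) := by rw [hec]; rfl
    simp only [ContinuousLinearMap.mul_apply, ContinuousLinearMap.one_apply,
      ContinuousLinearMap.coe_coe, this, ec.symm_apply_apply]

/-- Pseudo-inverse identity. -/
lemma pinv_apply (A : En →L[ℝ] Em) (hA : Function.Injective A) (w : En) :
    Ring.inverse ((ContinuousLinearMap.adjoint A).comp A)
      ((ContinuousLinearMap.adjoint A) (A w)) = w := by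
  have h := Ring.inverse_mul_cancel _ (isUnit_gram A hA)
  have h2 : (Ring.inverse ((ContinuousLinearMap.adjoint A).comp A) *
      ((ContinuousLinearMap.adjoint A).comp A)) w = w := by rw [h]; rfl
  simpa [ContinuousLinearMap.mul_apply] using h2

/-- adjoint is smooth (it is a bounded linear map). -/
lemma contDiff_adjoint {k : WithTop ℕ∞} :
    ContDiff ℝ k (fun A : En →L[ℝ] Em => ContinuousLinearMap.adjoint A) := by
  apply IsBoundedLinearMap.contDiff
  refine ⟨⟨fun A B => map_add _ _ _, fun c A => ?_⟩, 1, one_pos, fun A => ?_⟩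
  · simpa using (ContinuousLinearMap.adjoint (𝕜 := ℝ) (E := En) (F := Em)).map_smulₛₗ c A
  · rw [one_mul]
    exact le_of_eq (LinearIsometryEquiv.norm_map ContinuousLinearMap.adjoint A)

end Aux



section Aux2

variable {n m : ℕ}

local notation "En" => EuclideanSpace ℝ (Fin n)
local notation "Em" => EuclideanSpace ℝ (Fin m)

/-- Smooth vector field `X` with `Df(u) (X u) = f u`. -/
lemma exists_vectorField (U : Set En) (hU : IsOpen U) (f : En → Em)
    (hf : ContDiffOn ℝ (⊤ : ℕ∞) f U)
    (himm : ∀ u ∈ U, Function.Injective (fderiv ℝ f u))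
    (htan : ∀ u ∈ U, f u ∈ LinearMap.range (fderiv ℝ f u : En →ₗ[ℝ] Em)) :
    ∃ X : En → En, (∀ u ∈ U, ContDiffAt ℝ (⊤ : ℕ∞) X u) ∧
      (∀ u ∈ U, fderiv ℝ f u (X u) = f u) := by
  classical
  set A : En → (En →L[ℝ] Em) := fun u => fderiv ℝ f u with hA_def
  set G : En → (En →L[ℝ] En) :=
    fun u => (ContinuousLinearMap.adjoint (A u)).comp (A u) with hG_def
  refine ⟨fun u => Ring.inverse (G u) ((ContinuousLinearMap.adjoint (A u)) (f u)), ?_, ?_⟩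
  · intro u hu
    have hA : ContDiffAt ℝ (⊤ : ℕ∞) A u :=
      ((hf.fderiv_of_isOpen hU (by simp)) u hu).contDiffAt (hU.mem_nhds hu)
    have hAd : ContDiffAt ℝ (⊤ : ℕ∞) (fun u => ContinuousLinearMap.adjoint (A u)) u :=
      contDiff_adjoint.contDiffAt.comp u hA
    have hG : ContDiffAt ℝ (⊤ : ℕ∞) G u := hAd.clm_comp hA
    have hunit : IsUnit (G u) := isUnit_gram (A u) (himm u hu)
    have hinv : ContDiffAt ℝ (⊤ : ℕ∞) (fun u => Ring.inverse (G u)) u := by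
      have h1 : ContDiffAt ℝ (⊤ : ℕ∞) Ring.inverse (G u) := by
        have := contDiffAt_ringInverse ℝ (n := (⊤ : ℕ∞)) hunit.unit
        rwa [hunit.unit_spec] at this
      exact h1.comp u hG
    have hfc : ContDiffAt ℝ (⊤ : ℕ∞) f u := (hf u hu).contDiffAt (hU.mem_nhds hu)
    exact hinv.clm_apply (hAd.clm_apply hfc)
  · intro u hu
    obtain ⟨w, hw⟩ := htan u hu
    have h1 : Ring.inverse (G u) ((ContinuousLinearMap.adjoint (A u)) (f u)) = w := by
      rw [← hw]; exact pinv_apply (A u) (himm u hu) w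
    show fderiv ℝ f u (Ring.inverse (G u) ((ContinuousLinearMap.adjoint (A u)) (f u))) = f u
    rw [h1]; exact hw

end Aux2

/-- **Lemma 3.1.** If the position vector of a smooth immersion `f : U → ℝᵐ` is everywhere
tangential and nonzero (`x = x^T`, i.e. `f u ∈ T_u` and `f u ≠ 0`), then the image of `f`
is locally a cone with vertex at the origin: through each `u₀ ∈ U` there is a smooth curve
`γ` with `γ 1 = u₀` along which `f (γ t) = t • f u₀`. -/
theorem stmt_1 {n m : ℕ} (hn : 0 < n) (hnm : n < m)
    (U : Set (EuclideanSpace ℝ (Fin n))) (hU : IsOpen U) (hUconn : IsConnected U)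
    (f : EuclideanSpace ℝ (Fin n) → EuclideanSpace ℝ (Fin m))
    (hf : ContDiffOn ℝ (⊤ : ℕ∞) f U)
    (himm : ∀ u ∈ U, Function.Injective (fderiv ℝ f u))
    (htan : ∀ u ∈ U, f u ∈ LinearMap.range (fderiv ℝ f u : EuclideanSpace ℝ (Fin n) →ₗ[ℝ] EuclideanSpace ℝ (Fin m)))
    (hne : ∀ u ∈ U, f u ≠ 0) :
    ∀ u₀ ∈ U, ∃ ε > (0 : ℝ), ∃ γ : ℝ → EuclideanSpace ℝ (Fin n),
      ContDiffOn ℝ (⊤ : ℕ∞) γ (Set.Ioo (1 - ε) (1 + ε)) ∧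
      (∀ t ∈ Set.Ioo (1 - ε) (1 + ε), γ t ∈ U) ∧
      γ 1 = u₀ ∧
      ∀ t ∈ Set.Ioo (1 - ε) (1 + ε), f (γ t) = t • f u₀ := by
  intro u₀ hu₀
  obtain ⟨X, hXsm, hXid⟩ := exists_vectorField U hU f hf himm htan
  -- pseudo-inverse of the derivative at u₀
  set A₀ : EuclideanSpace ℝ (Fin n) →L[ℝ] EuclideanSpace ℝ (Fin m) := fderiv ℝ f u₀ with hA₀
  set B : EuclideanSpace ℝ (Fin m) →L[ℝ] EuclideanSpace ℝ (Fin n) :=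
    (Ring.inverse ((ContinuousLinearMap.adjoint A₀).comp A₀)).comp
      (ContinuousLinearMap.adjoint A₀) with hB
  have hBA : ∀ w, B (A₀ w) = w := fun w => pinv_apply A₀ (himm u₀ hu₀) w
  set φ : EuclideanSpace ℝ (Fin n) → EuclideanSpace ℝ (Fin n) := fun u => B (f u) with hφ
  have hfc : ContDiffAt ℝ (⊤ : ℕ∞) f u₀ := (hf u₀ hu₀).contDiffAt (hU.mem_nhds hu₀)
  have hfu₀ : HasFDerivAt f A₀ u₀ :=
    (hfc.differentiableAt (by simp)).hasFDerivAt
  have hφc : ContDiffAt ℝ (⊤ : ℕ∞) φ u₀ := B.contDiff.contDiffAt.comp u₀ hfc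
  have hcomp : B.comp A₀ =
      ((ContinuousLinearEquiv.refl ℝ (EuclideanSpace ℝ (Fin n))) :
        EuclideanSpace ℝ (Fin n) →L[ℝ] EuclideanSpace ℝ (Fin n)) := by
    refine ContinuousLinearMap.ext fun w => ?_
    simp [hBA w]
  have hφ' : HasFDerivAt φ
      ((ContinuousLinearEquiv.refl ℝ (EuclideanSpace ℝ (Fin n))) :
        EuclideanSpace ℝ (Fin n) →L[ℝ] EuclideanSpace ℝ (Fin n)) u₀ := by
    rw [← hcomp]; exact B.hasFDerivAt.comp u₀ hfu₀
  set ψ := hφc.localInverse hφ' (by simp) with hψ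
  have hψc : ContDiffAt ℝ (⊤ : ℕ∞) ψ (φ u₀) := hφc.to_localInverse hφ' (by simp)
  have hψφ : ∀ᶠ x in nhds u₀, ψ (φ x) = x :=
    (hφc.hasStrictFDerivAt' hφ' (by simp)).eventually_left_inverse
  have hψu₀ : ψ (φ u₀) = u₀ := hφc.localInverse_apply_image hφ' (by simp)
  -- the ODE solution σ
  have hX1 : ContDiffAt ℝ 1 X u₀ := (hXsm u₀ hu₀).of_le (by simp)
  obtain ⟨σ, hσ0, ε₀, hε₀, hσ⟩ := hX1.exists_forall_mem_closedBall_exists_eq_forall_mem_Ioo_hasDerivAt₀ 0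
  have hσcont : ContinuousAt σ 0 :=
    (hσ 0 (by constructor <;> simpa using hε₀)).continuousAt
  -- choose δ
  have hmem : σ ⁻¹' (U ∩ {x | ψ (φ x) = x}) ∩ Ioo (-ε₀) ε₀ ∈ nhds (0 : ℝ) := by
    refine Filter.inter_mem ?_ (Ioo_mem_nhds (by simpa using hε₀) hε₀)
    apply hσcont.preimage_mem_nhds
    rw [hσ0]
    exact Filter.inter_mem (hU.mem_nhds hu₀) hψφ
  obtain ⟨δ, hδpos, hδ⟩ := Metric.mem_nhds_iff.mp hmem
  have hball : ∀ s : ℝ, |s| < δ →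
      (σ s ∈ U ∧ ψ (φ (σ s)) = σ s) ∧ s ∈ Ioo (-ε₀) ε₀ := by
    intro s hs
    have := hδ (by simpa [Real.dist_eq] using hs)
    exact ⟨this.1, this.2⟩
  -- key: f (σ s) = exp s • f u₀
  have key : ∀ s : ℝ, |s| < δ → f (σ s) = Real.exp s • f u₀ := by
    have hg : ∀ s ∈ Metric.ball (0:ℝ) δ,
        HasDerivWithinAt (fun s => Real.exp (-s) • f (σ s)) 0 (Metric.ball (0:ℝ) δ) s := by
      intro s hs
      have hsδ : |s| < δ := by simpa [Real.dist_eq] using hs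
      have hsU : σ s ∈ U := ((hball s hsδ).1).1
      have hsI : s ∈ Ioo (0 - ε₀) (0 + ε₀) := by
        have h := (hball s hsδ).2
        constructor
        · simpa using h.1
        · simpa using h.2
      have hfs : HasFDerivAt f (fderiv ℝ f (σ s)) (σ s) :=
        (((hf (σ s) hsU).contDiffAt (hU.mem_nhds hsU)).differentiableAt (by simp)).hasFDerivAt
      have hc1 : HasDerivAt (fun s => f (σ s)) (f (σ s)) s := by
        have h := hfs.comp_hasDerivAt s (hσ s hsI)
        rwa [hXid (σ s) hsU] at h
      have hexp' : HasDerivAt (fun s : ℝ => Real.exp (-s)) (-Real.exp (-s)) s := by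
        have h := (hasDerivAt_neg s).exp
        simpa using h
      have h := hexp'.smul hc1
      have h2 : HasDerivAt (fun s => Real.exp (-s) • f (σ s)) 0 s := by
        rw [neg_smul, add_neg_cancel] at h
        exact h
      exact h2.hasDerivWithinAt
    intro s hsδ
    have hs : s ∈ Metric.ball (0:ℝ) δ := by simpa [Real.dist_eq] using hsδ
    have h0 : (0:ℝ) ∈ Metric.ball (0:ℝ) δ := Metric.mem_ball_self hδpos
    have hle := Convex.norm_image_sub_le_of_norm_hasDerivWithin_le
        (f' := fun _ => (0 : EuclideanSpace ℝ (Fin m))) (C := 0) hg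
        (fun x _ => by simp) (convex_ball 0 δ) h0 hs
    have heq : Real.exp (-s) • f (σ s) = f u₀ := by
      have h5 : ‖Real.exp (-s) • f (σ s) - Real.exp (-0) • f (σ 0)‖ ≤ 0 := by
        simpa using hle
      have h6 : Real.exp (-s) • f (σ s) = Real.exp (-0) • f (σ 0) := by
        have := norm_sub_eq_zero_iff.mp (le_antisymm h5 (norm_nonneg _))
        exact this
      rw [h6, hσ0]
      simp
    calc f (σ s) = Real.exp s • (Real.exp (-s) • f (σ s)) := by
          rw [smul_smul, ← Real.exp_add, add_neg_cancel, Real.exp_zero, one_smul]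
      _ = Real.exp s • f u₀ := by rw [heq]
  -- γ (exp s) = σ s
  set γ : ℝ → EuclideanSpace ℝ (Fin n) := fun t => ψ (t • B (f u₀)) with hγ
  have hγσ : ∀ s : ℝ, |s| < δ → γ (Real.exp s) = σ s := by
    intro s hs
    have h1 : φ (σ s) = Real.exp s • B (f u₀) := by
      rw [hφ]; show B (f (σ s)) = _
      rw [key s hs, map_smul]
    show ψ (Real.exp s • B (f u₀)) = σ s
    rw [← h1]
    exact ((hball s hs).1).2
  -- smoothness of γ near 1
  have hγc : ContDiffAt ℝ (⊤ : ℕ∞) γ 1 := by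
    have hsmul : ContDiffAt ℝ (⊤ : ℕ∞) (fun t : ℝ => t • B (f u₀)) 1 :=
      (contDiff_id.smul contDiff_const).contDiffAt
    have h1 : ((1:ℝ) • B (f u₀)) = φ u₀ := by simp [hφ]
    exact ContDiffAt.comp 1 (by rw [h1]; exact hψc) hsmul
  obtain ⟨W, hWopen, hW1, hWsm⟩ : ∃ W : Set ℝ, IsOpen W ∧ (1:ℝ) ∈ W ∧
      ContDiffOn ℝ (⊤ : ℕ∞) γ W := by
    have hφU : ContDiffOn ℝ (⊤ : ℕ∞) φ U := B.contDiff.comp_contDiffOn hf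
    have hDφ : ContinuousOn (fderiv ℝ φ) U := hφU.continuousOn_fderiv_of_isOpen hU (by simp)
    set H := hφc.toOpenPartialHomeomorph φ hφ' (by simp) with hH
    have hψH : ψ = H.symm := rfl
    set S := H.source ∩ (U ∩ fderiv ℝ φ ⁻¹' {L | IsUnit L}) with hS
    have hSopen : IsOpen S := H.open_source.inter (hDφ.isOpen_inter_preimage hU Units.isOpen)
    have hu₀S : u₀ ∈ S := by
      refine ⟨hφc.mem_toOpenPartialHomeomorph_source hφ' (by simp), hu₀, ?_⟩
      show IsUnit (fderiv ℝ φ u₀)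
      rw [hφ'.fderiv, ContinuousLinearEquiv.coe_refl, ← ContinuousLinearMap.one_def]
      exact isUnit_one
    have hVopen : IsOpen (H '' S) := H.isOpen_image_of_subset_source hSopen (fun x hx => hx.1)
    have hψV : ∀ y ∈ H '' S, ContDiffAt ℝ (⊤ : ℕ∞) ψ y := by
      rintro y ⟨x, hx, rfl⟩
      obtain ⟨L, hL⟩ := hx.2.2
      have hxU := hx.2.1
      have hφx : ContDiffAt ℝ (⊤ : ℕ∞) φ x := (hφU x hxU).contDiffAt (hU.mem_nhds hxU)
      have hsymm : H.symm (H x) = x := H.left_inv hx.1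
      rw [hψH]
      refine H.contDiffAt_symm (f₀' := ContinuousLinearEquiv.unitsEquiv ℝ _ L)
        (H.map_source hx.1) ?_ ?_
      · rw [hsymm]
        have := (hφx.differentiableAt (by simp)).hasFDerivAt
        rw [← hL] at this
        exact this
      · rw [hsymm]; exact hφx
    refine ⟨(fun t : ℝ => t • B (f u₀)) ⁻¹' (H '' S),
      (continuous_id.smul continuous_const).isOpen_preimage _ hVopen, ?_, ?_⟩
    · show (1:ℝ) • B (f u₀) ∈ H '' S
      rw [one_smul]
      exact ⟨u₀, hu₀S, rfl⟩
    · intro t ht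
      exact (ContDiffAt.comp t (hψV _ ht)
        ((contDiff_id.smul contDiff_const).contDiffAt)).contDiffWithinAt
  -- choose final ε
  have htarget : W ∩ Ioo (Real.exp (-δ)) (Real.exp δ) ∈ nhds (1 : ℝ) := by
    refine Filter.inter_mem (hWopen.mem_nhds hW1) (Ioo_mem_nhds ?_ ?_)
    · calc Real.exp (-δ) < Real.exp 0 := Real.exp_lt_exp.mpr (by linarith)
        _ = 1 := Real.exp_zero
    · calc (1 : ℝ) = Real.exp 0 := Real.exp_zero.symm
        _ < Real.exp δ := Real.exp_lt_exp.mpr hδpos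
  obtain ⟨ε, hεpos, hε⟩ := Metric.mem_nhds_iff.mp htarget
  have hexps : ∀ t ∈ Ioo (1 - ε) (1 + ε), ∃ s : ℝ, |s| < δ ∧ Real.exp s = t := by
    intro t ht
    have htW : t ∈ W ∩ Ioo (Real.exp (-δ)) (Real.exp δ) := by
      apply hε
      rw [Metric.mem_ball, Real.dist_eq, abs_lt]
      constructor <;> [linarith [ht.1]; linarith [ht.2]]
    have ht0 : (0:ℝ) < t := lt_trans (Real.exp_pos _) htW.2.1
    refine ⟨Real.log t, ?_, Real.exp_log ht0⟩
    rw [abs_lt]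
    constructor
    · exact (Real.lt_log_iff_exp_lt ht0).mpr htW.2.1
    · exact (Real.log_lt_iff_lt_exp ht0).mpr htW.2.2
  refine ⟨ε, hεpos, γ, ?_, ?_, ?_, ?_⟩
  · -- smoothness
    refine hWsm.mono fun t ht => ?_
    have : t ∈ W ∩ Ioo (Real.exp (-δ)) (Real.exp δ) := by
      apply hε
      rw [Metric.mem_ball, Real.dist_eq, abs_lt]
      constructor <;> [linarith [ht.1]; linarith [ht.2]]
    exact this.1
  · -- γ t ∈ U
    intro t ht
    obtain ⟨s, hs, rfl⟩ := hexps t ht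
    rw [hγσ s hs]
    exact ((hball s hs).1).1
  · -- γ 1 = u₀
    show ψ ((1 : ℝ) • B (f u₀)) = u₀
    rw [one_smul]
    exact hψu₀
  · -- f (γ t) = t • f u₀
    intro t ht
    obtain ⟨s, hs, rfl⟩ := hexps t ht
    rw [hγσ s hs, key s hs]
end

section
/- The map x defined by x(s,u) := √(s²+c²) • Y(s,u) satisfies, at every point (s,u) ∈ U, the identity x(s,u) − s • (∂x/∂s)(s,u) = (c²/√(s²+c²)) • Y(s,u) − s√(s²+c²) • (∂Y/∂s)(s,u), and this vector has norm exactly c; in particular the normal component x^N = x − s ∂x/∂s of the position vector is nonzero everywhere on U. (The closing computation in the proof of Theorem 4.2.) -/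
open scoped RealInnerProductSpace

/-- Partial derivative in the first (`s`) coordinate direction of `ℝ × ℝᵏ`. -/
noncomputable def pds {k m : ℕ}
    (x : ℝ × EuclideanSpace ℝ (Fin k) → EuclideanSpace ℝ (Fin m))
    (p : ℝ × EuclideanSpace ℝ (Fin k)) : EuclideanSpace ℝ (Fin m) :=
  fderiv ℝ x p (1, 0)

/-- Partial derivative in the `j`-th coordinate direction of the second factor of
`ℝ × ℝᵏ`. -/
noncomputable def pdu {k m : ℕ}
    (x : ℝ × EuclideanSpace ℝ (Fin k) → EuclideanSpace ℝ (Fin m))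
    (j : Fin k) (p : ℝ × EuclideanSpace ℝ (Fin k)) : EuclideanSpace ℝ (Fin m) :=
  fderiv ℝ x p (0, EuclideanSpace.single j 1)

/-- Orthogonal projection of `v` onto the tangent space `range (fderiv ℝ x p)`. -/
noncomputable def tangentProjP {k m : ℕ}
    (x : ℝ × EuclideanSpace ℝ (Fin k) → EuclideanSpace ℝ (Fin m))
    (p : ℝ × EuclideanSpace ℝ (Fin k)) (v : EuclideanSpace ℝ (Fin m)) :
    EuclideanSpace ℝ (Fin m) :=
  (Submodule.orthogonalProjectionOnto (LinearMap.range (fderiv ℝ x p : ℝ × EuclideanSpace ℝ (Fin k) →ₗ[ℝ] EuclideanSpace ℝ (Fin m))) v : EuclideanSpace ℝ (Fin m))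

/-- Second fundamental form of `x` at `p`: normal component of the second derivative. -/
noncomputable def sffP {k m : ℕ}
    (x : ℝ × EuclideanSpace ℝ (Fin k) → EuclideanSpace ℝ (Fin m))
    (p X Y : ℝ × EuclideanSpace ℝ (Fin k)) : EuclideanSpace ℝ (Fin m) :=
  fderiv ℝ (fderiv ℝ x) p X Y - tangentProjP x p (fderiv ℝ (fderiv ℝ x) p X Y)

/-- The map `x(s,u) = √(s² + c²) • Y(s,u)` of Theorem 4.2. -/
noncomputable def xMap {k m : ℕ} (c : ℝ)
    (Y : ℝ × EuclideanSpace ℝ (Fin k) → EuclideanSpace ℝ (Fin m))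
    (p : ℝ × EuclideanSpace ℝ (Fin k)) : EuclideanSpace ℝ (Fin m) :=
  Real.sqrt (p.1 ^ 2 + c ^ 2) • Y p

/-- **Closing computation in the proof of Theorem 4.2.** The map
`x(s,u) = √(s²+c²) • Y(s,u)` satisfies
`x − s ∂x/∂s = (c²/√(s²+c²)) Y − s √(s²+c²) ∂Y/∂s`, and this normal component
`x^N = x − s ∂x/∂s` has norm exactly `c`; in particular it is nonzero everywhere. -/
theorem stmt_16 {n m : ℕ} (hn : 2 ≤ n) (hnm : n < m)
    (c : ℝ) (hc : 0 < c) (a b : ℝ) (ha : 0 ≤ a)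
    (V : Set (EuclideanSpace ℝ (Fin (n - 1)))) (hV : IsOpen V) (hVconn : IsConnected V)
    (Y : ℝ × EuclideanSpace ℝ (Fin (n - 1)) → EuclideanSpace ℝ (Fin m))
    (hYs : ContDiffOn ℝ (⊤ : ℕ∞) Y (Set.Ioo a b ×ˢ V))
    (hY1 : ∀ p ∈ Set.Ioo a b ×ˢ V, ⟪Y p, Y p⟫ = 1)
    (hYss : ∀ p ∈ Set.Ioo a b ×ˢ V,
      ⟪pds Y p, pds Y p⟫ = c ^ 2 / (p.1 ^ 2 + c ^ 2) ^ 2)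
    (hYsu : ∀ p ∈ Set.Ioo a b ×ˢ V, ∀ j : Fin (n - 1), ⟪pds Y p, pdu Y j p⟫ = 0)
    (g : Fin (n - 1) → Fin (n - 1) → EuclideanSpace ℝ (Fin (n - 1)) → ℝ)
    (hg : ∀ i j, ContDiffOn ℝ (⊤ : ℕ∞) (g i j) V)
    (hYuu : ∀ p ∈ Set.Ioo a b ×ˢ V, ∀ i j : Fin (n - 1),
      ⟪pdu Y i p, pdu Y j p⟫ = (p.1 ^ 2 / (p.1 ^ 2 + c ^ 2)) * g i j p.2)
    (hind : ∀ p ∈ Set.Ioo a b ×ˢ V,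
      LinearIndependent ℝ (fun j : Fin (n - 1) => pdu Y j p)) :
    ∀ p ∈ Set.Ioo a b ×ˢ V,
      xMap c Y p - p.1 • pds (xMap c Y) p
        = (c ^ 2 / Real.sqrt (p.1 ^ 2 + c ^ 2)) • Y p
          - (p.1 * Real.sqrt (p.1 ^ 2 + c ^ 2)) • pds Y p ∧
      ‖xMap c Y p - p.1 • pds (xMap c Y) p‖ = c ∧
      xMap c Y p - p.1 • pds (xMap c Y) p ≠ 0 := by
  intro p hp
  have hU : IsOpen (Set.Ioo a b ×ˢ V) := isOpen_Ioo.prod hV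
  have hnhds : Set.Ioo a b ×ˢ V ∈ nhds p := hU.mem_nhds hp
  have hpos : (0:ℝ) < p.1 ^ 2 + c ^ 2 := by positivity
  have hsqrt : Real.sqrt (p.1 ^ 2 + c ^ 2) ≠ 0 := by positivity
  have hsq : Real.sqrt (p.1 ^ 2 + c ^ 2) ^ 2 = p.1 ^ 2 + c ^ 2 := Real.sq_sqrt hpos.le
  have hYd : DifferentiableAt ℝ Y p :=
    ((hYs.contDiffAt hnhds).differentiableAt (by simp))
  have hY' : HasFDerivAt Y (fderiv ℝ Y p) p := hYd.hasFDerivAt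
  -- derivative of the square root factor
  have hg1 : HasFDerivAt (fun q : ℝ × EuclideanSpace ℝ (Fin (n-1)) => q.1 ^ 2 + c ^ 2)
      (((2:ℝ) * p.1) • ContinuousLinearMap.fst ℝ ℝ _) p := by
    have h1 : HasFDerivAt (fun q : ℝ × EuclideanSpace ℝ (Fin (n-1)) => q.1)
        (ContinuousLinearMap.fst ℝ ℝ _) p := hasFDerivAt_fst
    have h2 := (h1.mul h1).add_const (c ^ 2)
    have he : ((2:ℝ) * p.1) • ContinuousLinearMap.fst ℝ ℝ (EuclideanSpace ℝ (Fin (n-1)))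
        = p.1 • ContinuousLinearMap.fst ℝ ℝ _ + p.1 • ContinuousLinearMap.fst ℝ ℝ _ := by
      rw [← add_smul]; ring_nf
    rw [he]
    have heq : (fun q : ℝ × EuclideanSpace ℝ (Fin (n-1)) => q.1 ^ 2 + c ^ 2)
        = fun q => q.1 * q.1 + c ^ 2 := by funext q; ring
    rw [heq]
    exact h2
  have hroot : HasDerivAt Real.sqrt (1 / (2 * Real.sqrt (p.1 ^ 2 + c ^ 2)))
      (p.1 ^ 2 + c ^ 2) := Real.hasDerivAt_sqrt hpos.ne'
  have hf : HasFDerivAt (fun q : ℝ × EuclideanSpace ℝ (Fin (n-1)) =>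
      Real.sqrt (q.1 ^ 2 + c ^ 2))
      ((1 / (2 * Real.sqrt (p.1 ^ 2 + c ^ 2))) • (((2:ℝ) * p.1) • ContinuousLinearMap.fst ℝ ℝ _)) p :=
    hroot.comp_hasFDerivAt p hg1
  have hx : HasFDerivAt (xMap c Y)
      (Real.sqrt (p.1 ^ 2 + c ^ 2) • fderiv ℝ Y p +
        ((1 / (2 * Real.sqrt (p.1 ^ 2 + c ^ 2))) • (((2:ℝ) * p.1) • ContinuousLinearMap.fst ℝ ℝ _)).smulRight (Y p)) p :=
    hf.smul hY'
  have hpds : pds (xMap c Y) p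
      = Real.sqrt (p.1 ^ 2 + c ^ 2) • pds Y p + (p.1 / Real.sqrt (p.1 ^ 2 + c ^ 2)) • Y p := by
    have h := hx.fderiv
    unfold pds
    rw [h]
    simp only [ContinuousLinearMap.add_apply, ContinuousLinearMap.smul_apply,
      ContinuousLinearMap.smulRight_apply, ContinuousLinearMap.coe_fst']
    match_scalars
    · field_simp
    · field_simp; simp only [smul_eq_mul, mul_one]; field_simp
  -- orthogonality of Y and ∂Y/∂s
  have hinner : HasFDerivAt (fun q => (inner ℝ (Y q) (Y q) : ℝ))
      ((fderivInnerCLM ℝ (Y p, Y p)).comp ((fderiv ℝ Y p).prod (fderiv ℝ Y p))) p :=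
    hY'.inner ℝ hY'
  have hconst : HasFDerivAt (fun q => (inner ℝ (Y q) (Y q) : ℝ)) (0 : _ →L[ℝ] ℝ) p := by
    apply (hasFDerivAt_const (1:ℝ) p).congr_of_eventuallyEq
    filter_upwards [hnhds] with q hq
    exact hY1 q hq
  have horth : ⟪Y p, pds Y p⟫ = 0 := by
    have h := hinner.unique hconst
    have h2 := congrArg (fun L => L ((1:ℝ), (0 : EuclideanSpace ℝ (Fin (n-1))))) h
    simp only [ContinuousLinearMap.comp_apply, ContinuousLinearMap.prod_apply,
      fderivInnerCLM_apply, ContinuousLinearMap.zero_apply] at h2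
    have h3 : ⟪Y p, pds Y p⟫ + ⟪pds Y p, Y p⟫ = 0 := h2
    have h4 := real_inner_comm (Y p) (pds Y p)
    linarith
  -- the identity
  have hid : xMap c Y p - p.1 • pds (xMap c Y) p
      = (c ^ 2 / Real.sqrt (p.1 ^ 2 + c ^ 2)) • Y p
        - (p.1 * Real.sqrt (p.1 ^ 2 + c ^ 2)) • pds Y p := by
    rw [hpds]
    unfold xMap
    match_scalars
    · field_simp; linarith [hsq]
    · ring
  have hnorm : ‖xMap c Y p - p.1 • pds (xMap c Y) p‖ = c := by
    have hnorm2 : ⟪xMap c Y p - p.1 • pds (xMap c Y) p, xMap c Y p - p.1 • pds (xMap c Y) p⟫ = c ^ 2 := by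
      rw [hid]
      rw [inner_sub_sub_self]
      simp only [real_inner_smul_left, real_inner_smul_right,
        real_inner_comm (pds Y p) (Y p), hY1 p hp, hYss p hp, horth]
      have horth' : ⟪pds Y p, Y p⟫ = (0:ℝ) := by rw [real_inner_comm]; exact horth
      rw [horth']
      have h2 : Real.sqrt (p.1 ^ 2 + c ^ 2) * Real.sqrt (p.1 ^ 2 + c ^ 2) = p.1 ^ 2 + c ^ 2 :=
        Real.mul_self_sqrt hpos.le
      field_simp
      have h4 : Real.sqrt (p.1 ^ 2 + c ^ 2) ^ 4 = (p.1 ^ 2 + c ^ 2) ^ 2 := by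
        rw [show (4:ℕ) = 2 * 2 from rfl, pow_mul, hsq]
      rw [h4, hsq]; ring
    have hvn : ‖xMap c Y p - p.1 • pds (xMap c Y) p‖ ^ 2 = c ^ 2 := by
      rw [← real_inner_self_eq_norm_sq]; exact hnorm2
    have := congrArg Real.sqrt hvn
    rwa [Real.sqrt_sq (norm_nonneg _), Real.sqrt_sq hc.le] at this
  refine ⟨hid, hnorm, ?_⟩
  intro h0
  rw [h0, norm_zero] at hnorm
  exact hc.ne' hnorm.symm
end
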